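/- arXiv:1608.00236 — 8 statements merged into one kernel-verified Lean document; each statement's English description precedes it below -/
import Mathlib

section
/- Fix n, p ∈ ℕ, observations y ∈ ℝⁿ, covariate vectors x₁, …, xₙ ∈ ℝᵖ, and a constant λ ≥ 0. Define f(β, γ) = Σ_{i=1}^n (yᵢ − xᵢᵀβ − γᵢ)² + λ·|{i : γᵢ ≠ 0}| for β ∈ ℝᵖ, γ ∈ ℝⁿ, and g(β) = Σ_{i=1}^n min{(yᵢ − xᵢᵀβ)², λ}. Then the infimum of f over all (β, γ) ∈ ℝᵖ × ℝⁿ equals the infimum of g over all β ∈ ℝᵖ. -/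
open scoped Classical

theorem stmt_0 (n p : ℕ) (y : Fin n → ℝ) (x : Fin n → Fin p → ℝ)
    (lam : ℝ) (hlam : 0 ≤ lam) :
    (⨅ bg : (Fin p → ℝ) × (Fin n → ℝ),
        (∑ i, (y i - (∑ j, x i j * bg.1 j) - bg.2 i) ^ 2)
          + lam * ((Finset.univ.filter fun i => bg.2 i ≠ 0).card : ℝ))
      = ⨅ β : Fin p → ℝ, ∑ i, min ((y i - ∑ j, x i j * β j) ^ 2) lam := by
  have hf : ∀ bg : (Fin p → ℝ) × (Fin n → ℝ),
      (∑ i, (y i - (∑ j, x i j * bg.1 j) - bg.2 i) ^ 2)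
          + lam * ((Finset.univ.filter fun i => bg.2 i ≠ 0).card : ℝ)
        = ∑ i, ((y i - (∑ j, x i j * bg.1 j) - bg.2 i) ^ 2
            + lam * (if bg.2 i ≠ 0 then (1 : ℝ) else 0)) := by
    intro bg
    rw [Finset.sum_add_distrib, ← Finset.mul_sum]
    congr 2
    rw [Finset.card_filter]
    push_cast
    congr 1
  have hbdd1 : BddBelow (Set.range fun bg : (Fin p → ℝ) × (Fin n → ℝ) =>
      (∑ i, (y i - (∑ j, x i j * bg.1 j) - bg.2 i) ^ 2)
          + lam * ((Finset.univ.filter fun i => bg.2 i ≠ 0).card : ℝ)) := by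
    refine ⟨0, fun v hv => ?_⟩
    obtain ⟨bg, rfl⟩ := hv
    positivity
  have hbdd2 : BddBelow (Set.range fun β : Fin p → ℝ =>
      ∑ i, min ((y i - ∑ j, x i j * β j) ^ 2) lam) := by
    refine ⟨0, fun v hv => ?_⟩
    obtain ⟨β, rfl⟩ := hv
    exact Finset.sum_nonneg fun i _ => le_min (by positivity) hlam
  apply le_antisymm
  · apply le_ciInf
    intro β
    set γ : Fin n → ℝ := fun i =>
      if lam < (y i - ∑ j, x i j * β j) ^ 2 then y i - ∑ j, x i j * β j else 0 with hγ
    refine (ciInf_le hbdd1 (β, γ)).trans_eq ?_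
    rw [hf]
    apply Finset.sum_congr rfl
    intro i _
    by_cases h : lam < (y i - ∑ j, x i j * β j) ^ 2
    · have hne : (y i - ∑ j, x i j * β j) ≠ 0 := by
        intro h0
        rw [h0] at h
        simp at h
        exact absurd h (not_lt.2 hlam)
      simp only [hγ, if_pos h, if_pos hne, min_eq_right (le_of_lt h)]
      ring
    · have : γ i = 0 := by simp [hγ, h]
      simp [this, min_eq_left (not_lt.1 h)]
  · apply le_ciInf
    intro bg
    refine (ciInf_le hbdd2 bg.1).trans ?_
    rw [hf]
    apply Finset.sum_le_sum
    intro i _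
    by_cases h : bg.2 i ≠ 0
    · calc min ((y i - ∑ j, x i j * bg.1 j) ^ 2) lam ≤ lam := min_le_right _ _
        _ ≤ (y i - (∑ j, x i j * bg.1 j) - bg.2 i) ^ 2 + lam * 1 := by nlinarith [sq_nonneg (y i - (∑ j, x i j * bg.1 j) - bg.2 i)]
        _ = _ := by rw [if_pos h]
    · rw [not_not] at h
      have : (y i - (∑ j, x i j * bg.1 j) - bg.2 i) = y i - ∑ j, x i j * bg.1 j := by
        rw [h]; ring
      rw [this]
      simp [h, min_le_left]
end

section
/- Fix n, p ∈ ℕ, observations y ∈ ℝⁿ, covariate vectors x₁, …, xₙ ∈ ℝᵖ, a constant λ ≥ 0, and β ∈ ℝᵖ. Define f(β, γ) = Σ_{i=1}^n (yᵢ − xᵢᵀβ − γᵢ)² + λ·|{i : γᵢ ≠ 0}|. Let γ* ∈ ℝⁿ be given by γᵢ* = 0 if (yᵢ − xᵢᵀβ)² < λ and γᵢ* = yᵢ − xᵢᵀβ otherwise. Then f(β, γ*) = Σ_{i=1}^n min{(yᵢ − xᵢᵀβ)², λ}, and f(β, γ*) ≤ f(β, γ) for every γ ∈ ℝⁿ.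 -/
open scoped Classical

lemma card_lam (n : ℕ) (lam : ℝ) (γ : Fin n → ℝ) :
    lam * ((Finset.univ.filter fun i => γ i ≠ 0).card : ℝ)
      = ∑ i, if γ i ≠ 0 then lam else 0 := by
  rw [Finset.card_filter]
  push_cast
  rw [Finset.mul_sum]
  congr 1
  ext i
  split <;> simp

lemma pointwise_eq (lam : ℝ) (hlam : 0 ≤ lam) (r g : ℝ)
    (hg : g = if r ^ 2 < lam then 0 else r) :
    (r - g) ^ 2 + (if g ≠ 0 then lam else 0) = min (r ^ 2) lam := by
  by_cases h : r ^ 2 < lam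
  · simp [hg, h, min_eq_left h.le]
  · push_neg at h
    by_cases hr : r = 0
    · have : lam = 0 := le_antisymm (by simpa [hr] using h) hlam
      simp [hg, hr, this]
    · simp [hg, if_neg (not_lt.mpr h), hr, min_eq_right h]

lemma pointwise_le (lam : ℝ) (r g : ℝ) :
    min (r ^ 2) lam ≤ (r - g) ^ 2 + (if g ≠ 0 then lam else 0) := by
  by_cases hg : g = 0
  · simp only [hg, if_neg (by simp : ¬(0:ℝ) ≠ 0), sub_zero, add_zero]
    exact min_le_left _ _
  · calc min (r ^ 2) lam ≤ lam := min_le_right _ _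
      _ ≤ (r - g) ^ 2 + lam := le_add_of_nonneg_left (sq_nonneg _)
      _ = (r - g) ^ 2 + (if g ≠ 0 then lam else 0) := by rw [if_pos hg]

theorem stmt_2 (n p : ℕ) (y : Fin n → ℝ) (x : Fin n → Fin p → ℝ)
    (lam : ℝ) (hlam : 0 ≤ lam) (β : Fin p → ℝ) (γstar : Fin n → ℝ)
    (hγ : ∀ i, γstar i =
      if (y i - ∑ j, x i j * β j) ^ 2 < lam then 0 else y i - ∑ j, x i j * β j) :
    ((∑ i, (y i - (∑ j, x i j * β j) - γstar i) ^ 2)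
        + lam * ((Finset.univ.filter fun i => γstar i ≠ 0).card : ℝ)
      = ∑ i, min ((y i - ∑ j, x i j * β j) ^ 2) lam)
    ∧ ∀ γ : Fin n → ℝ,
        (∑ i, (y i - (∑ j, x i j * β j) - γstar i) ^ 2)
            + lam * ((Finset.univ.filter fun i => γstar i ≠ 0).card : ℝ)
          ≤ (∑ i, (y i - (∑ j, x i j * β j) - γ i) ^ 2)
            + lam * ((Finset.univ.filter fun i => γ i ≠ 0).card : ℝ) := by
  have key : ((∑ i, (y i - (∑ j, x i j * β j) - γstar i) ^ 2)
        + lam * ((Finset.univ.filter fun i => γstar i ≠ 0).card : ℝ)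
      = ∑ i, min ((y i - ∑ j, x i j * β j) ^ 2) lam) := by
    rw [card_lam, ← Finset.sum_add_distrib]
    exact Finset.sum_congr rfl fun i _ => pointwise_eq lam hlam _ _ (hγ i)
  refine ⟨key, fun γ => ?_⟩
  rw [key, card_lam, ← Finset.sum_add_distrib]
  exact Finset.sum_le_sum fun i _ => pointwise_le lam _ _
end

section
/- Fix n, p ∈ ℕ, observations y ∈ ℝⁿ, covariate vectors x₁, …, xₙ ∈ ℝᵖ, and λ ≥ 0. Let b : ℝ → ℝ be convex and differentiable, and suppose that for each i there is θᵢ* ∈ ℝ with b′(θᵢ*) = yᵢ (write θᵢ* = g(yᵢ)). Define f(β, γ) = Σ_{i=1}^n [b(xᵢᵀβ + γᵢ) − (xᵢᵀβ + γᵢ)yᵢ] + λ·|{i : γᵢ ≠ 0}| and h(β) = Σ_{i=1}^n min{b(xᵢᵀβ) − (xᵢᵀβ)yᵢ, λᵢ*}, where λᵢ* = b(g(yᵢ)) − g(yᵢ)·yᵢ + λ. Then the infimum of f over (β, γ) ∈ ℝᵖ × ℝⁿ equals the infimum of h over β ∈ ℝᵖ. -/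
open scoped Classical

/-- A convex differentiable function lies above its tangent lines: here specialized to
show that a point with `deriv b θ = yv` is a global minimizer of `t ↦ b t - t * yv`. -/
lemma stmt_3_key (b : ℝ → ℝ) (hconv : ConvexOn ℝ Set.univ b) (hdiff : Differentiable ℝ b)
    (θ yv : ℝ) (hθ : deriv b θ = yv) (t : ℝ) : b θ - θ * yv ≤ b t - t * yv := by
  rcases lt_trichotomy t θ with h | h | h
  · have hs := hconv.slope_le_deriv (Set.mem_univ t) (Set.mem_univ θ) h (hdiff θ)
    rw [hθ, slope_def_field, div_le_iff₀ (by linarith)] at hs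
    nlinarith
  · simp [h]
  · have hs := hconv.deriv_le_slope (Set.mem_univ θ) (Set.mem_univ t) h (hdiff θ)
    rw [hθ, slope_def_field, le_div_iff₀ (by linarith)] at hs
    nlinarith

theorem stmt_3 (n p : ℕ) (y : Fin n → ℝ) (x : Fin n → Fin p → ℝ)
    (lam : ℝ) (hlam : 0 ≤ lam)
    (b : ℝ → ℝ) (hconv : ConvexOn ℝ Set.univ b) (hdiff : Differentiable ℝ b)
    (θ : Fin n → ℝ) (hθ : ∀ i, deriv b (θ i) = y i) :
    (⨅ bg : (Fin p → ℝ) × (Fin n → ℝ),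
        (∑ i, (b ((∑ j, x i j * bg.1 j) + bg.2 i)
            - ((∑ j, x i j * bg.1 j) + bg.2 i) * y i))
          + lam * ((Finset.univ.filter fun i => bg.2 i ≠ 0).card : ℝ))
      = ⨅ β : Fin p → ℝ,
          ∑ i, min (b (∑ j, x i j * β j) - (∑ j, x i j * β j) * y i)
            (b (θ i) - θ i * y i + lam) := by
  have key : ∀ i t, b (θ i) - θ i * y i ≤ b t - t * y i :=
    fun i t => stmt_3_key b hconv hdiff (θ i) (y i) (hθ i) t
  set F : (Fin p → ℝ) × (Fin n → ℝ) → ℝ := fun bg =>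
      (∑ i, (b ((∑ j, x i j * bg.1 j) + bg.2 i)
          - ((∑ j, x i j * bg.1 j) + bg.2 i) * y i))
        + lam * ((Finset.univ.filter fun i => bg.2 i ≠ 0).card : ℝ) with hF
  set H : (Fin p → ℝ) → ℝ := fun β =>
      ∑ i, min (b (∑ j, x i j * β j) - (∑ j, x i j * β j) * y i)
        (b (θ i) - θ i * y i + lam) with hH
  -- rewrite the penalty as a sum of indicators
  have hcard : ∀ γ : Fin n → ℝ,
      lam * ((Finset.univ.filter fun i => γ i ≠ 0).card : ℝ)
        = ∑ i, (if γ i ≠ 0 then lam else 0) := by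
    intro γ
    rw [Finset.sum_ite, Finset.sum_const, Finset.sum_const_zero, add_zero,
      nsmul_eq_mul, mul_comm]
  have hFsum : ∀ bg : (Fin p → ℝ) × (Fin n → ℝ), F bg =
      ∑ i, ((b ((∑ j, x i j * bg.1 j) + bg.2 i)
        - ((∑ j, x i j * bg.1 j) + bg.2 i) * y i) + (if bg.2 i ≠ 0 then lam else 0)) := by
    intro bg
    rw [hF]
    beta_reduce
    rw [hcard bg.2, ← Finset.sum_add_distrib]
  -- common lower bound
  have hbddF : BddBelow (Set.range F) := by
    refine ⟨∑ i, (b (θ i) - θ i * y i), ?_⟩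
    rintro _ ⟨bg, rfl⟩
    rw [hFsum]
    refine Finset.sum_le_sum fun i _ => ?_
    have := key i ((∑ j, x i j * bg.1 j) + bg.2 i)
    split <;> [linarith; linarith]
  have hbddH : BddBelow (Set.range H) := by
    refine ⟨∑ i, (b (θ i) - θ i * y i), ?_⟩
    rintro _ ⟨β, rfl⟩
    refine Finset.sum_le_sum fun i _ => ?_
    exact le_min (key i _) (by linarith [key i (θ i)])
  -- H β ≤ F (β, γ) for all γ
  have hstep2 : ∀ β γ, H β ≤ F (β, γ) := by
    intro β γ
    rw [hFsum]
    refine Finset.sum_le_sum fun i _ => ?_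
    by_cases hγ : γ i = 0
    · simp only [hγ, ne_eq, not_true_eq_false, if_false, add_zero]
      exact (min_le_left _ _).trans (by simp [hγ])
    · simp only [ne_eq, hγ, not_false_eq_true, if_true]
      exact (min_le_right _ _).trans (by linarith [key i ((∑ j, x i j * β j) + γ i)])
  -- for each β there is γ achieving H β
  have hstep3 : ∀ β, ∃ γ, F (β, γ) = H β := by
    intro β
    refine ⟨fun i => if b (∑ j, x i j * β j) - (∑ j, x i j * β j) * y i ≤
        b (θ i) - θ i * y i + lam then 0 else θ i - (∑ j, x i j * β j), ?_⟩
    rw [hFsum, hH]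
    refine Finset.sum_congr rfl fun i _ => ?_
    by_cases hc : b (∑ j, x i j * β j) - (∑ j, x i j * β j) * y i ≤
        b (θ i) - θ i * y i + lam
    · simp [hc, min_eq_left hc]
    · have hne : θ i - (∑ j, x i j * β j) ≠ 0 := by
        intro h0
        have : θ i = ∑ j, x i j * β j := by linarith [sub_eq_zero.mp h0]
        apply hc
        rw [← this]
        linarith
      have hlt : b (θ i) - θ i * y i + lam ≤
          b (∑ j, x i j * β j) - (∑ j, x i j * β j) * y i := (lt_of_not_ge hc).le
      have harg : (∑ j, x i j * β j) + (θ i - ∑ j, x i j * β j) = θ i := by ring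
      simp only [hc, if_false, hne, ne_eq, not_false_eq_true, if_true, harg, min_eq_right hlt]
  apply le_antisymm
  · refine le_ciInf fun β => ?_
    obtain ⟨γ, hγ⟩ := hstep3 β
    exact (ciInf_le hbddF (β, γ)).trans (le_of_eq hγ)
  · exact le_ciInf fun bg => (ciInf_le hbddH bg.1).trans (hstep2 bg.1 bg.2)
end

section
/- Let b : ℝ → ℝ be convex and differentiable, y ∈ ℝ, and suppose θ* ∈ ℝ satisfies b′(θ*) = y. Then for every t ∈ ℝ and every λ ≥ 0, the infimum over γ ∈ ℝ of b(t + γ) − (t + γ)y + λ·1(γ ≠ 0) equals min{b(t) − t·y, b(θ*) − θ*·y + λ}. -/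
open scoped Classical

lemma global_min_aux (b : ℝ → ℝ) (hconv : ConvexOn ℝ Set.univ b) (hdiff : Differentiable ℝ b)
    (y θstar : ℝ) (hθ : deriv b θstar = y) (x : ℝ) :
    b θstar - θstar * y ≤ b x - x * y := by
  rcases lt_trichotomy x θstar with h | rfl | h
  · have := hconv.slope_le_deriv (Set.mem_univ x) (Set.mem_univ θstar) h (hdiff θstar)
    rw [hθ, slope_def_field, div_le_iff₀ (by linarith)] at this
    nlinarith
  · exact le_refl _
  · have := hconv.deriv_le_slope (Set.mem_univ θstar) (Set.mem_univ x) h (hdiff θstar)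
    rw [hθ, slope_def_field, le_div_iff₀ (by linarith)] at this
    nlinarith

theorem stmt_4 (b : ℝ → ℝ) (hconv : ConvexOn ℝ Set.univ b) (hdiff : Differentiable ℝ b)
    (y θstar : ℝ) (hθ : deriv b θstar = y) (t lam : ℝ) (hlam : 0 ≤ lam) :
    (⨅ γ : ℝ, b (t + γ) - (t + γ) * y + if γ ≠ 0 then lam else 0)
      = min (b t - t * y) (b θstar - θstar * y + lam) := by
  have hmin := global_min_aux b hconv hdiff y θstar hθ
  set f : ℝ → ℝ := fun γ => b (t + γ) - (t + γ) * y + if γ ≠ 0 then lam else 0 with hf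
  have hlb : ∀ γ, min (b t - t * y) (b θstar - θstar * y + lam) ≤ f γ := by
    intro γ
    by_cases hγ : γ = 0
    · subst hγ
      simpa [hf] using min_le_left (b t - t * y) (b θstar - θstar * y + lam)
    · simp only [hf, if_pos hγ]
      refine le_trans (min_le_right _ _) ?_
      have := hmin (t + γ)
      linarith
  have hbdd : BddBelow (Set.range f) := ⟨_, fun x ⟨γ, hγ⟩ => hγ ▸ hlb γ⟩
  apply le_antisymm
  · rcases le_or_gt (b t - t * y) (b θstar - θstar * y + lam) with h | h
    · rw [min_eq_left h]
      have : f 0 = b t - t * y := by simp [hf]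
      exact this ▸ ciInf_le hbdd 0
    · rw [min_eq_right h.le]
      have hne : θstar - t ≠ 0 := by
        intro h0
        have : θstar = t := by linarith
        subst this
        linarith
      have : f (θstar - t) = b θstar - θstar * y + lam := by
        simp [hf, hne]
      exact this ▸ ciInf_le hbdd _
  · exact le_ciInf hlb
end

section
/- Fix n, p ∈ ℕ, observations y ∈ ℝⁿ with yᵢ > 0 for all i, covariate vectors x₁, …, xₙ ∈ ℝᵖ, and λ ≥ 0. Define f(β, γ) = Σ_{i=1}^n [e^{xᵢᵀβ + γᵢ} − (xᵢᵀβ + γᵢ)yᵢ] + λ·|{i : γᵢ ≠ 0}| and h(β) = Σ_{i=1}^n min{e^{xᵢᵀβ} − (xᵢᵀβ)yᵢ, λᵢ*}, where λᵢ* = λ − yᵢ·log yᵢ + yᵢ. Then the infimum of f over (β, γ) ∈ ℝᵖ × ℝⁿ equals the infimum of h over β ∈ ℝᵖ. -/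
/-!
The ℓ₀ penalty decouples over the coordinates of γ. For fixed β, each γᵢ is either `0`, costing the
plain Poisson loss at θ = xᵢᵀβ, or nonzero, costing λ plus at least the global minimum
yᵢ - yᵢ log yᵢ of θ ↦ e^θ - θ yᵢ, which is reached at γᵢ = log yᵢ - xᵢᵀβ. So the infimum over γ
is attained and equals h(β), and an infimum over pairs is the infimum of the partial infima.
-/

open Real Set Finset

theorem ciInf_prod_eq_ciInf_of_isLeast {α ι L : Type*} [ConditionallyCompleteLattice L]
    {f : α × ι → L} {g : α → L} (hg : BddBelow (range g))
    (h : ∀ a, IsLeast (range fun b => f (a, b)) (g a)) :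
    ⨅ q, f q = ⨅ a, g a := by
  have hf : BddBelow (range f) := by
    obtain ⟨C, hC⟩ := hg
    refine ⟨C, forall_mem_range.2 fun q => ?_⟩
    exact (hC (mem_range_self q.1)).trans ((h q.1).2 ⟨q.2, rfl⟩)
  rw [ciInf_prod hf]
  exact iInf_congr fun a => (h a).csInf_eq

theorem isLeast_range_sum_pi {ι : Type*} [Fintype ι] {M : Type*} [AddCommMonoid M]
    [PartialOrder M] [IsOrderedAddMonoid M] {β : ι → Type*} {f : ∀ i, β i → M} {m : ι → M}
    (h : ∀ i, IsLeast (range (f i)) (m i)) :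
    IsLeast (range fun b : ∀ i, β i => ∑ i, f i (b i)) (∑ i, m i) := by
  choose b hb using fun i => (h i).1
  refine ⟨⟨b, Finset.sum_congr rfl fun i _ => hb i⟩, forall_mem_range.2 fun b' => ?_⟩
  exact Finset.sum_le_sum fun i _ => (h i).2 ⟨b' i, rfl⟩

theorem sub_mul_log_le_exp_sub_mul {y : ℝ} (hy : 0 < y) (θ : ℝ) :
    y - y * log y ≤ exp θ - θ * y := by
  have hexp : exp θ = y * exp (θ - log y) := by
    rw [exp_sub, exp_log hy, mul_div_cancel₀ _ hy.ne']
  have := mul_le_mul_of_nonneg_left (add_one_le_exp (θ - log y)) hy.le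
  linarith

theorem isLeast_range_exp_sub_mul_add_ite {y lam : ℝ} (hy : 0 < y) (hlam : 0 ≤ lam) (t : ℝ) :
    IsLeast (range fun γ => exp (t + γ) - (t + γ) * y + if γ ≠ 0 then lam else 0)
      (min (exp t - t * y) (lam - y * log y + y)) := by
  refine ⟨?_, forall_mem_range.2 fun γ => ?_⟩
  · rcases le_or_gt (exp t - t * y) (lam - y * log y + y) with hle | hlt
    · exact ⟨0, by simp [min_eq_left hle]⟩
    · have hγ : log y - t ≠ 0 := by
        intro h
        rw [← sub_eq_zero.1 h, exp_log hy] at hlt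
        linarith
      refine ⟨log y - t, ?_⟩
      simp only [add_sub_cancel, exp_log hy, ne_eq, hγ, not_false_eq_true, if_true,
        min_eq_right hlt.le]
      ring
  · by_cases hγ : γ = 0
    · simp [hγ]
    · have := sub_mul_log_le_exp_sub_mul hy (t + γ)
      simp only [ne_eq, hγ, not_false_eq_true, if_true]
      linarith [min_le_right (exp t - t * y) (lam - y * log y + y)]

theorem stmt_6 (n p : ℕ) (y : Fin n → ℝ) (hy : ∀ i, 0 < y i)
    (x : Fin n → Fin p → ℝ) (lam : ℝ) (hlam : 0 ≤ lam) :
    (⨅ bg : (Fin p → ℝ) × (Fin n → ℝ),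
        (∑ i, (Real.exp ((∑ j, x i j * bg.1 j) + bg.2 i)
            - ((∑ j, x i j * bg.1 j) + bg.2 i) * y i))
          + lam * ((Finset.univ.filter fun i => bg.2 i ≠ 0).card : ℝ))
      = ⨅ β : Fin p → ℝ,
          ∑ i, min (Real.exp (∑ j, x i j * β j) - (∑ j, x i j * β j) * y i)
            (lam - y i * Real.log (y i) + y i) := by
  refine ciInf_prod_eq_ciInf_of_isLeast ?_ fun β => ?_
  · refine ⟨∑ i, (y i - y i * log (y i)), forall_mem_range.2 fun β => ?_⟩
    refine Finset.sum_le_sum fun i _ => le_min (sub_mul_log_le_exp_sub_mul (hy i) _) ?_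
    linarith
  · convert isLeast_range_sum_pi fun i =>
      isLeast_range_exp_sub_mul_add_ite (hy i) hlam (∑ j, x i j * β j) using 3 with γ
    rw [natCast_card_filter, mul_sum, ← sum_add_distrib]
    simp only [mul_ite, mul_one, mul_zero]
end

section
/- Let f₁, …, fₙ : ℝ^d → ℝ be convex functions. For I ⊆ {1, …, n} define A_I = {x ∈ ℝ^d : f_k(x) ≤ 0 for all k ∈ I and f_k(x) > 0 for all k ∉ I}. Then, with infima taken in the extended reals ℝ ∪ {−∞, +∞}, inf_{x ∈ ℝ^d} Σ_{i=1}^n min{fᵢ(x), 0} = inf over all I ⊆ {1, …, n} with A_I ≠ ∅ of [ inf_{x ∈ ℝ^d} Σ_{k ∈ I} f_k(x) ], where a sum over the empty index set is 0. -/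
theorem stmt_7 (n d : ℕ) (f : Fin n → (Fin d → ℝ) → ℝ)
    (hconv : ∀ i, ConvexOn ℝ Set.univ (f i)) :
    (⨅ x : Fin d → ℝ, ((∑ i, min (f i x) 0 : ℝ) : EReal))
      = ⨅ I : {I : Finset (Fin n) //
            ∃ x : Fin d → ℝ, (∀ k, k ∈ I → f k x ≤ 0) ∧ ∀ k, k ∉ I → 0 < f k x},
          ⨅ x : Fin d → ℝ, ((∑ k ∈ I.1, f k x : ℝ) : EReal) := by
  apply le_antisymm
  · refine le_iInf fun I => le_iInf fun x => le_trans (iInf_le _ x) ?_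
    refine EReal.coe_le_coe_iff.mpr ?_
    calc ∑ i, min (f i x) 0 ≤ ∑ k ∈ I.1, min (f k x) 0 := by
          have := Finset.sum_le_sum_of_subset_of_nonneg (f := fun i => -min (f i x) 0)
            (I.1.subset_univ) (fun i _ _ => by simp [min_le_right])
          linarith [Finset.sum_neg_distrib (s := I.1) (f := fun i => min (f i x) 0),
            Finset.sum_neg_distrib (s := (Finset.univ : Finset (Fin n)))
              (f := fun i => min (f i x) 0)]
      _ ≤ ∑ k ∈ I.1, f k x := Finset.sum_le_sum fun k _ => min_le_left _ _
  · refine le_iInf fun x => ?_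
    have hmem : ∃ y : Fin d → ℝ,
        (∀ k, k ∈ Finset.univ.filter (fun k => f k x ≤ 0) → f k y ≤ 0) ∧
        ∀ k, k ∉ Finset.univ.filter (fun k => f k x ≤ 0) → 0 < f k y := by
      refine ⟨x, fun k hk => (Finset.mem_filter.mp hk).2, fun k hk => ?_⟩
      by_contra h
      exact hk (Finset.mem_filter.mpr ⟨Finset.mem_univ k, le_of_not_gt h⟩)
    refine le_trans (iInf_le _ ⟨Finset.univ.filter (fun k => f k x ≤ 0), hmem⟩) ?_
    refine le_trans (iInf_le _ x) (le_of_eq ?_)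
    norm_cast
    rw [Finset.sum_filter]
    refine Finset.sum_congr rfl fun i _ => ?_
    split_ifs with h
    · exact (min_eq_left h).symm
    · exact (min_eq_right (le_of_not_ge h)).symm
end

section
/- Fix n ∈ ℕ and a clause on three distinct variable indices k₁, k₂, k₃ ∈ {1, …, n} with literal signs s₁, s₂, s₃ ∈ {true, false} (sⱼ = true meaning the j-th literal is the variable itself, sⱼ = false meaning its negation). For x ∈ ℝⁿ, say the j-th literal is true at x if (x_{kⱼ} > 0) = sⱼ, and say the clause is satisfied at x if at least one of its three literals is true at x. For each triple t = (t₁, t₂, t₃) ∈ {true, false}³ with t ≠ (false, false, false), define g_t : ℝⁿ → ℝ ∪ {+∞} by g_t(x) = 0 if for every j ∈ {1, 2, 3} the j-th literal is true at x exactly when tⱼ = true, and g_t(x) = +∞ otherwise. Then for every x ∈ ℝⁿ, the sum over the seven such triples t of min{g_t(x), 1} equals 6 if the clause is satisfied at x, and equals 7 otherwise. -/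
open scoped Classical

theorem stmt_13 (n : ℕ) (k : Fin 3 → Fin n) (hk : Function.Injective k)
    (s : Fin 3 → Bool) (x : Fin n → ℝ)
    (g : (Fin 3 → Bool) → (Fin n → ℝ) → EReal)
    (hg : ∀ t z, g t z =
      if ∀ j : Fin 3, (((0 < z (k j)) ↔ s j = true) ↔ t j = true) then 0 else ⊤) :
    (∑ t ∈ Finset.univ.filter fun t : Fin 3 → Bool => t ≠ fun _ => false,
        min (g t x) 1)
      = if ∃ j : Fin 3, ((0 < x (k j)) ↔ s j = true) then (6 : EReal) else 7 := by
  set t₀ : Fin 3 → Bool := fun j => decide ((0 < x (k j)) ↔ s j = true) with ht₀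
  have key : ∀ t : Fin 3 → Bool, min (g t x) 1 = if t = t₀ then 0 else 1 := by
    intro t
    rw [hg]
    by_cases h : t = t₀
    · subst h
      rw [if_pos, if_pos rfl]
      · exact min_eq_left zero_le_one
      · intro j; simp only [ht₀, decide_eq_true_iff]
    · rw [if_neg, if_neg h]
      · exact min_eq_right le_top
      · intro hall
        apply h
        funext j
        have hj := hall j
        simp only [ht₀]
        by_cases hp : (0 < x (k j)) ↔ s j = true
        · have ht : t j = true := hj.mp hp
          simp [ht, hp]
        · have ht : t j = false := by
            cases hb : t j
            · rfl
            · exact absurd (hj.mpr hb) hp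
          simp [ht, hp]
  have hcardS : (Finset.univ.filter fun t : Fin 3 → Bool => t ≠ fun _ => false).card = 7 := by
    decide
  have hone : ∀ m : ℕ, m • (1 : EReal) = (m : EReal) := fun m => by
    induction m with
    | zero => simp
    | succ p ih => rw [succ_nsmul, ih, Nat.cast_succ]
  rw [Finset.sum_congr rfl (fun t _ => key t)]
  by_cases hsat : ∃ j : Fin 3, ((0 < x (k j)) ↔ s j = true)
  · rw [if_pos hsat]
    have hmem : t₀ ∈ Finset.univ.filter fun t : Fin 3 → Bool => t ≠ fun _ => false := by
      simp only [Finset.mem_filter, Finset.mem_univ, true_and]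
      intro h
      obtain ⟨j, hj⟩ := hsat
      have h2 := congrFun h j
      rw [ht₀] at h2
      simp only [decide_eq_false_iff_not] at h2
      exact h2 hj
    rw [← Finset.add_sum_erase _ _ hmem, if_pos rfl, zero_add]
    rw [Finset.sum_congr rfl (fun t ht => if_neg (Finset.ne_of_mem_erase ht))]
    rw [Finset.sum_const, Finset.card_erase_of_mem hmem, hcardS, hone]
    norm_num
  · rw [if_neg hsat]
    have hnmem : ∀ t ∈ Finset.univ.filter fun t : Fin 3 → Bool => t ≠ fun _ => false,
        t ≠ t₀ := by
      intro t ht he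
      subst he
      simp only [Finset.mem_filter, Finset.mem_univ, true_and] at ht
      apply ht
      funext j
      simp only [ht₀, decide_eq_false_iff_not]
      intro h
      exact hsat ⟨j, h⟩
    rw [Finset.sum_congr rfl (fun t ht => if_neg (hnmem t ht))]
    rw [Finset.sum_const, hcardS, hone]
    norm_num
end

section
/- Let φ be a 3-CNF formula over n Boolean variables with m clauses, where each clause consists of three literals on three distinct variables. For each clause i and each triple t ∈ {true, false}³ with t ≠ (false, false, false), define g_{it} : ℝⁿ → ℝ ∪ {+∞} by g_{it}(x) = 0 if for every j ∈ {1, 2, 3} the j-th literal of clause i is true at x exactly when tⱼ = true, and g_{it}(x) = +∞ otherwise, where the j-th literal of clause i (on variable k with sign s) is true at x if (x_k > 0) = s. Define G : ℝⁿ → ℝ by G(x) = Σ_{i=1}^m Σ_t min{g_{it}(x), 1}. Then φ is satisfiable if and only if inf_{x ∈ ℝⁿ} G(x) = 6m; moreover, in that case the infimum is attained. -/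
open scoped Classical

private lemma ereal_coe_sum {ι : Type*} (F : Finset ι) (f : ι → ℝ) :
    ((∑ i ∈ F, f i : ℝ) : EReal) = ∑ i ∈ F, ((f i : ℝ) : EReal) :=
  map_sum (⟨⟨(fun r : ℝ => (r : EReal)), EReal.coe_zero⟩,
    fun a b => EReal.coe_add a b⟩ : ℝ →+ EReal) f F

theorem stmt_14 (n m : ℕ) (k : Fin m → Fin 3 → Fin n)
    (hk : ∀ i, Function.Injective (k i)) (s : Fin m → Fin 3 → Bool)
    (G : (Fin n → ℝ) → EReal)
    (hG : ∀ x, G x = ∑ i : Fin m,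
      ∑ t ∈ Finset.univ.filter fun t : Fin 3 → Bool => t ≠ fun _ => false,
        min (if ∀ j : Fin 3, (((0 < x (k i j)) ↔ s i j = true) ↔ t j = true)
             then (0 : EReal) else ⊤) 1) :
    ((∃ a : Fin n → Bool, ∀ i : Fin m, ∃ j : Fin 3, a (k i j) = s i j)
        ↔ (⨅ x : Fin n → ℝ, G x) = (((6 * m : ℕ) : ℝ) : EReal))
      ∧ ((∃ a : Fin n → Bool, ∀ i : Fin m, ∃ j : Fin 3, a (k i j) = s i j)
          → ∃ x : Fin n → ℝ, G x = (((6 * m : ℕ) : ℝ) : EReal)) := by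
  set F : Finset (Fin 3 → Bool) :=
    Finset.univ.filter fun t : Fin 3 → Bool => t ≠ fun _ => false with hF
  have hFcard : F.card = 7 := by decide
  set N : (Fin n → ℝ) → ℕ := fun x =>
    ∑ i : Fin m, if ∃ j : Fin 3, ((0 < x (k i j)) ↔ s i j = true) then 6 else 7 with hN
  have key : ∀ x, G x = ((N x : ℝ) : EReal) := by
    intro x
    rw [hG]; simp only [hN]
    push_cast
    rw [ereal_coe_sum]
    refine Finset.sum_congr rfl fun i _ => ?_
    set T : Fin 3 → Bool := fun j => decide ((0 < x (k i j)) ↔ s i j = true) with hT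
    have hTspec : ∀ j, ((0 < x (k i j)) ↔ s i j = true) ↔ T j = true := by
      intro j; rw [hT]; simp only [decide_eq_true_eq]
    have hcond : ∀ t : Fin 3 → Bool,
        (∀ j : Fin 3, (((0 < x (k i j)) ↔ s i j = true) ↔ t j = true)) ↔ t = T := by
      intro t
      constructor
      · intro h; funext j
        have := (hTspec j).symm.trans (h j)
        exact Bool.coe_iff_coe.mp this.symm
      · rintro rfl; exact hTspec
    have hterm : ∀ t : Fin 3 → Bool,
        min (if ∀ j : Fin 3, (((0 < x (k i j)) ↔ s i j = true) ↔ t j = true)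
             then (0 : EReal) else ⊤) 1 = if t = T then (0:EReal) else 1 := by
      intro t
      by_cases h : t = T
      · rw [if_pos ((hcond t).mpr h), if_pos h]; simp
      · rw [if_neg (fun hh => h ((hcond t).mp hh)), if_neg h]; simp
    rw [Finset.sum_congr rfl fun t _ => hterm t]
    have hsat : (∃ j : Fin 3, ((0 < x (k i j)) ↔ s i j = true)) ↔ T ≠ fun _ => false := by
      constructor
      · rintro ⟨j, hj⟩ hc
        have := (hTspec j).mp hj
        rw [hc] at this; simp at this
      · intro h
        by_contra hc
        apply h; funext j
        exact decide_eq_false (fun hp => hc ⟨j, hp⟩)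
    by_cases hs : T ∈ F
    · have hTne : T ≠ fun _ => false := by
        rw [hF] at hs; simpa using hs
      rw [if_pos (hsat.mpr hTne)]
      rw [← Finset.add_sum_erase F _ hs, if_pos rfl, zero_add]
      have : ∀ t ∈ F.erase T, (if t = T then (0:EReal) else 1) = 1 := by
        intro t ht
        rw [if_neg (Finset.ne_of_mem_erase ht)]
      rw [Finset.sum_congr rfl this, Finset.sum_const, Finset.card_erase_of_mem hs, hFcard]
      norm_num
      rfl
    · have hTeq : T = fun _ => false := by
        rw [hF] at hs; simpa using hs
      rw [if_neg (fun h => (hsat.mp h) hTeq)]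
      have : ∀ t ∈ F, (if t = T then (0:EReal) else 1) = 1 := by
        intro t ht
        have : t ≠ T := by
          rw [hF] at ht; simp at ht; rw [hTeq]; exact ht
        rw [if_neg this]
      rw [Finset.sum_congr rfl this, Finset.sum_const, hFcard]
      norm_num
      rfl
  have hNlb : ∀ x, 6 * m ≤ N x := by
    intro x
    simp only [hN]
    calc 6 * m = ∑ _i : Fin m, 6 := by simp [Finset.sum_const, mul_comm]
    _ ≤ _ := Finset.sum_le_sum fun i _ => by split <;> omega
  have hGlb : ∀ x, (((6 * m : ℕ) : ℝ) : EReal) ≤ G x := by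
    intro x
    rw [key x]
    exact_mod_cast hNlb x
  have hsat_fwd : (∃ a : Fin n → Bool, ∀ i : Fin m, ∃ j : Fin 3, a (k i j) = s i j) →
      ∃ x : Fin n → ℝ, G x = (((6 * m : ℕ) : ℝ) : EReal) := by
    rintro ⟨a, ha⟩
    refine ⟨fun v => if a v then 1 else -1, ?_⟩
    rw [key]
    have hNx : N (fun v => if a v then 1 else -1) = 6 * m := by
      simp only [hN]
      have hterm : ∀ i : Fin m,
          (if ∃ j : Fin 3, ((0 < (if a (k i j) then (1:ℝ) else -1)) ↔ s i j = true)
           then 6 else 7) = 6 := by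
        intro i
        obtain ⟨j, hj⟩ := ha i
        rw [if_pos]
        refine ⟨j, ?_⟩
        rw [← hj]
        by_cases hb : a (k i j) <;> simp [hb]
      rw [Finset.sum_congr rfl fun i _ => hterm i]
      simp [Finset.sum_const, mul_comm]
    rw [hNx]
  constructor
  · constructor
    · intro h
      obtain ⟨x, hx⟩ := hsat_fwd h
      refine le_antisymm ?_ ?_
      · rw [← hx]; exact iInf_le _ x
      · exact le_iInf hGlb
    · intro h
      by_contra hns
      have hstrict : ∀ x : Fin n → ℝ, 6 * m + 1 ≤ N x := by
        intro x
        by_contra hc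
        push_neg at hc
        have hle := hNlb x
        apply hns
        refine ⟨fun v => decide (0 < x v), fun i => ?_⟩
        by_contra hci
        push_neg at hci
        have hterm7 : (if ∃ j : Fin 3, ((0 < x (k i j)) ↔ s i j = true) then 6 else 7) = 7 := by
          rw [if_neg]
          rintro ⟨j, hj⟩
          refine hci j ?_
          have hd : decide (0 < x (k i j)) = decide (s i j = true) :=
            decide_eq_decide.mpr hj
          simpa using hd
        have hlt : (∑ _i : Fin m, 6) <
            ∑ i' : Fin m, (if ∃ j : Fin 3, ((0 < x (k i' j)) ↔ s i' j = true) then 6 else 7) := by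
          refine Finset.sum_lt_sum (fun i' _ => by split <;> omega)
            ⟨i, Finset.mem_univ i, by rw [hterm7]; omega⟩
        have h6m : (∑ _i : Fin m, 6) = 6 * m := by simp [Finset.sum_const, mul_comm]
        have : 6 * m < N x := by simp only [hN]; omega
        omega
      have hge : (((6*m+1 : ℕ):ℝ):EReal) ≤ ⨅ x : Fin n → ℝ, G x := by
        refine le_iInf fun x => ?_
        rw [key x]
        exact_mod_cast hstrict x
      rw [h] at hge
      have h1 : ((6*m+1 : ℕ):ℝ) ≤ ((6*m : ℕ):ℝ) := by exact_mod_cast hge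
      have h2 : (6*m+1 : ℕ) ≤ 6*m := by exact_mod_cast h1
      omega
  · exact hsat_fwd
end
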